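/- arXiv:1910.13900 — 3 statements merged into one kernel-verified Lean document; each statement's English description precedes it below -/
import Mathlib

section
/- Let (Z_t)_{t≥1} be uniformly bounded random variables (|Z_t| ≤ ρ) and τ a stopping-time-like random variable with finite expectation such that Z_t = 0 whenever t > τ, ∑_{t=1}^{τ} Z_t = S for a fixed random variable S, and E[Z_t | τ ≥ t] ≥ C > 0 for all t with P(τ ≥ t) > 0. Then E[τ] ≤ E[S]/C. -/
/-!
Both `E[τ] = ∑ₙ P(τ > n)` and `E[S] = ∑ₙ E[Z_{n+1}]` are instances of exchanging expectation
and summation for a bounded sequence vanishing from time `τ` on: it is dominated by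
`ρ · 1{n < τ}`, whose sum `ρ τ` is integrable. As `Z_{n+1}` vanishes off `{τ > n}`, the drift
hypothesis reads `C · P(τ > n) ≤ E[Z_{n+1}]`, and summing over `n` gives `C · E[τ] ≤ E[S]`.
-/

open MeasureTheory

theorem Finset.sum_range_add_one_eq_sum_Icc {M : Type*} [AddCommMonoid M] (f : ℕ → M) (n : ℕ) :
    ∑ k ∈ Finset.range n, f (k + 1) = ∑ k ∈ Finset.Icc 1 n, f k := by
  rw [Finset.range_eq_Ico, Finset.sum_Ico_add', zero_add, Finset.Ico_add_one_right_eq_Icc]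

section

variable {Ω : Type*} [MeasurableSpace Ω] {μ : Measure Ω} {τ : Ω → ℕ}

theorem hasSum_integral_sum_range_of_abs_le {X : ℕ → Ω → ℝ} {ρ : ℝ}
    (hX : ∀ n, AEStronglyMeasurable (X n) μ) (hbound : ∀ n ω, |X n ω| ≤ ρ)
    (hstop : ∀ n ω, τ ω ≤ n → X n ω = 0) (hτ : Integrable (fun ω => (τ ω : ℝ)) μ) :
    HasSum (fun n => ∫ ω, X n ω ∂μ) (∫ ω, ∑ n ∈ Finset.range (τ ω), X n ω ∂μ) := by
  have hsupp {f : ℕ → ℝ} {ω : Ω} (hf : ∀ n, τ ω ≤ n → f n = 0) :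
      HasSum f (∑ n ∈ Finset.range (τ ω), f n) :=
    hasSum_sum_of_ne_finset_zero fun n hn => hf n (by simpa using hn)
  let bound : ℕ → Ω → ℝ := fun n ω => if n < τ ω then ρ else 0
  have hbound_sum (ω : Ω) : HasSum (bound · ω) (τ ω * ρ) := by
    convert hsupp (f := (bound · ω)) fun n hn => if_neg (not_lt.2 hn) using 1
    simp +contextual [bound, Finset.sum_ite_of_true]
  refine hasSum_integral_of_dominated_convergence bound hX (fun n => ae_of_all _ fun ω => ?_)
    (ae_of_all _ fun ω => (hbound_sum ω).summable) ?_
    (ae_of_all _ fun ω => hsupp (hstop · ω))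
  · by_cases h : n < τ ω
    · simpa [bound, h] using hbound n ω
    · simp [bound, h, hstop n ω (not_lt.1 h)]
  · simpa only [(hbound_sum _).tsum_eq] using hτ.mul_const ρ

theorem hasSum_measureReal_lt (hτm : Measurable τ) (hτ : Integrable (fun ω => (τ ω : ℝ)) μ) :
    HasSum (fun n => μ.real {ω | n < τ ω}) (∫ ω, (τ ω : ℝ) ∂μ) := by
  have hmeas (n : ℕ) : MeasurableSet {ω | n < τ ω} := hτm measurableSet_Ioi
  have := hasSum_integral_sum_range_of_abs_le (ρ := 1) (X := fun n => {ω | n < τ ω}.indicator 1)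
    (fun n => (measurable_one.indicator (hmeas n)).aestronglyMeasurable)
    (fun n ω => by by_cases h : n < τ ω <;> simp [h])
    (fun n ω h => Set.indicator_of_notMem (s := {ω | n < τ ω}) (not_lt.2 h) _) hτ
  have hsum : (fun ω => ∑ n ∈ Finset.range (τ ω), {ω | n < τ ω}.indicator (1 : Ω → ℝ) ω) =
      fun ω => (τ ω : ℝ) := funext fun ω => by
    rw [Finset.sum_congr rfl fun n hn =>
      Set.indicator_of_mem (s := {ω | n < τ ω}) (Finset.mem_range.1 hn) _]
    simp
  simpa only [hsum, integral_indicator_one (hmeas _)] using this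

end

theorem stmt_5_general {Ω : Type*} [MeasurableSpace Ω] (μ : Measure Ω)
    (Z : ℕ → Ω → ℝ) (τ : Ω → ℕ) (S : Ω → ℝ) (ρ C : ℝ) (hC : 0 < C)
    (hZm : ∀ t, Measurable (Z t)) (hτm : Measurable τ)
    (hτint : Integrable (fun ω => (τ ω : ℝ)) μ)
    (hbound : ∀ t ω, |Z t ω| ≤ ρ)
    (hzero : ∀ t ω, τ ω < t → Z t ω = 0)
    (htel : ∀ ω, ∑ t ∈ Finset.Icc 1 (τ ω), Z t ω = S ω)
    (hdrift : ∀ t : ℕ, 1 ≤ t → 0 < μ {ω | t ≤ τ ω} →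
      C * (μ {ω | t ≤ τ ω}).toReal ≤ ∫ ω in {ω | t ≤ τ ω}, Z t ω ∂μ) :
    ∫ ω, (τ ω : ℝ) ∂μ ≤ (∫ ω, S ω ∂μ) / C := by
  have hS : HasSum (fun n => ∫ ω, Z (n + 1) ω ∂μ) (∫ ω, S ω ∂μ) := by
    have hsum : (fun ω => ∑ n ∈ Finset.range (τ ω), Z (n + 1) ω) = S :=
      funext fun ω => (Finset.sum_range_add_one_eq_sum_Icc (Z · ω) _).trans (htel ω)
    simpa only [hsum] using
      hasSum_integral_sum_range_of_abs_le (fun n => (hZm (n + 1)).aestronglyMeasurable)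
        (fun n => hbound (n + 1)) (fun n ω h => hzero _ _ (Nat.lt_succ_of_le h)) hτint
  have hstep (n : ℕ) : C * μ.real {ω | n < τ ω} ≤ ∫ ω, Z (n + 1) ω ∂μ := by
    rw [← setIntegral_eq_integral_of_forall_compl_eq_zero (s := {ω | n < τ ω})
      fun ω h => hzero _ ω (Nat.lt_succ_of_le (not_lt.1 h))]
    rcases eq_zero_or_pos (μ {ω | n < τ ω}) with h0 | hpos
    · rw [setIntegral_measure_zero _ h0, measureReal_def, h0]
      simp
    -- `n < τ ω` unfolds to `n + 1 ≤ τ ω`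
    · exact hdrift (n + 1) n.succ_pos hpos
  rw [le_div_iff₀' hC]
  exact hasSum_le hstep ((hasSum_measureReal_lt hτm hτint).mul_left C) hS

/-- Adjusted Wald-type stopping theorem: if `(Z_t)_{t≥1}` are uniformly bounded,
`Z_t = 0` for `t > τ`, `∑_{t=1}^{τ} Z_t = S`, `E[τ] < ∞`, and
`E[Z_t | τ ≥ t] ≥ C > 0` whenever `P(τ ≥ t) > 0`, then `E[τ] ≤ E[S]/C`. -/
theorem stmt_5 {Ω : Type*} [MeasurableSpace Ω] (μ : Measure Ω) [IsProbabilityMeasure μ]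
    (Z : ℕ → Ω → ℝ) (τ : Ω → ℕ) (S : Ω → ℝ) (ρ C : ℝ) (hC : 0 < C)
    (hZm : ∀ t, Measurable (Z t)) (hτm : Measurable τ)
    (hSint : Integrable S μ) (hτint : Integrable (fun ω => (τ ω : ℝ)) μ)
    (hbound : ∀ t ω, |Z t ω| ≤ ρ)
    (hzero : ∀ t ω, τ ω < t → Z t ω = 0)
    (htel : ∀ ω, ∑ t ∈ Finset.Icc 1 (τ ω), Z t ω = S ω)
    (hdrift : ∀ t : ℕ, 1 ≤ t → 0 < μ {ω | t ≤ τ ω} →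
      C * (μ {ω | t ≤ τ ω}).toReal ≤ ∫ ω in {ω | t ≤ τ ω}, Z t ω ∂μ) :
    ∫ ω, (τ ω : ℝ) ∂μ ≤ (∫ ω, S ω ∂μ) / C :=
  stmt_5_general μ Z τ S ρ C hC hZm hτm hτint hbound hzero htel hdrift
end

section
/- Let G be a graph with maximum degree Δ, D = Δ+1 colors, and χ a coloring in which vertex v is conflicted (shares its color with a neighbor). If v is recolored to a color chosen uniformly at random from {1,...,D}, then the expected increase in the number of monochromatic connected components is at least 1/D. -/
/-- The graph of monochromatic edges of `G` under the coloring `χ`. -/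
def monoGraph {V : Type*} {α : Type*} (G : SimpleGraph V) (χ : V → α) : SimpleGraph V where
  Adj v w := G.Adj v w ∧ χ v = χ w
  symm := ⟨fun v w h => ⟨h.1.symm, h.2.symm⟩⟩
  loopless := ⟨fun v h => G.loopless.irrefl v h.1⟩

/-- `Φ(χ)`: the number of monochromatic connected components of `G` under `χ`. -/
noncomputable def Phi {V : Type*} {α : Type*} (G : SimpleGraph V) (χ : V → α) : ℕ :=
  Nat.card (monoGraph G χ).ConnectedComponent

open SimpleGraph

section Aux

variable {V : Type*} {α : Type*} [DecidableEq V] (G : SimpleGraph V) (χ : V → α) (v : V)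

/-- The coloring where `v` gets a fresh color. -/
def chiZ : V → Option α := fun x => if x = v then none else some (χ x)

/-- `v` is isolated in the monochromatic graph of `chiZ`. -/
lemma H0_not_adj (x : V) : ¬ (monoGraph G (chiZ χ v)).Adj v x := by
  rintro ⟨hadj, hcol⟩
  have hx : x ≠ v := fun h => G.loopless.irrefl v (h ▸ hadj)
  simp [chiZ, hx] at hcol

lemma H0_reach_v {x : V} (h : (monoGraph G (chiZ χ v)).Reachable v x) : x = v := by
  obtain ⟨w⟩ := h
  cases w with
  | nil => rfl
  | cons h p => exact absurd h (H0_not_adj G χ v _)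

lemma H0_le (c : α) :
    monoGraph G (chiZ χ v) ≤ monoGraph G (Function.update χ v c) := by
  intro x y h
  obtain ⟨hadj, hcol⟩ := h
  have hx : x ≠ v := by
    intro h
    have hyv : y ≠ v := fun h' => hadj.ne (h.trans h'.symm)
    simp [chiZ, h, hyv] at hcol
  have hy : y ≠ v := by
    intro h
    simp [chiZ, h, hx] at hcol
  refine ⟨hadj, ?_⟩
  simp only [chiZ, if_neg hx, if_neg hy, Option.some.injEq] at hcol
  simp [Function.update_of_ne hx, Function.update_of_ne hy, hcol]

lemma Hc_adj_off {c : α} {x y : V} (hx : x ≠ v) (hy : y ≠ v)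
    (h : (monoGraph G (Function.update χ v c)).Adj x y) :
    (monoGraph G (chiZ χ v)).Adj x y := by
  obtain ⟨hadj, hcol⟩ := h
  refine ⟨hadj, ?_⟩
  simp only [Function.update_of_ne hx, Function.update_of_ne hy] at hcol
  simp [chiZ, hx, hy, hcol]

/-- Walks avoiding `v`'s component stay inside the `v`-deleted mono graph. -/
lemma walk_avoid {c : α} {x y : V}
    (w : (monoGraph G (Function.update χ v c)).Walk x y) :
    ¬ (monoGraph G (Function.update χ v c)).Reachable x v →
      (monoGraph G (chiZ χ v)).Reachable x y := by
  induction w with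
  | nil => exact fun _ => Reachable.refl _
  | @cons a b d h p ih =>
    intro hx
    have ha : a ≠ v := by rintro rfl; exact hx (Reachable.refl _)
    have hb : b ≠ v := by rintro rfl; exact hx h.reachable
    have hab := Hc_adj_off G χ v ha hb h
    have hbv : ¬ (monoGraph G (Function.update χ v c)).Reachable b v := fun hr =>
      hx (h.reachable.trans hr)
    exact hab.reachable.trans (ih hbv)

/-- Every vertex reachable from `v` in `Hc` is `v` or in the old component of a
new neighbor of `v`. -/
lemma reach_from_v {c : α} {x : V}
    (h : (monoGraph G (Function.update χ v c)).Reachable v x) :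
    x = v ∨ ∃ u, (monoGraph G (Function.update χ v c)).Adj v u ∧
      (monoGraph G (chiZ χ v)).Reachable u x := by
  obtain ⟨w⟩ := h
  have main : ∀ {y z : V}, (monoGraph G (Function.update χ v c)).Walk y z →
      (y = v ∨ ∃ u, (monoGraph G (Function.update χ v c)).Adj v u ∧
        (monoGraph G (chiZ χ v)).Reachable u y) →
      (z = v ∨ ∃ u, (monoGraph G (Function.update χ v c)).Adj v u ∧
        (monoGraph G (chiZ χ v)).Reachable u z) := by
    intro y z w
    induction w with
    | nil => exact id
    | @cons a b d h p ih =>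
      intro Pa
      refine ih ?_
      by_cases hbv : b = v
      · exact Or.inl hbv
      by_cases hav : a = v
      · subst hav
        exact Or.inr ⟨b, h, Reachable.refl _⟩
      rcases Pa with rfl | ⟨u, hu, hr⟩
      · exact absurd rfl hav
      · exact Or.inr ⟨u, hu, hr.trans (Hc_adj_off G χ v hav hbv h).reachable⟩
  exact main w (Or.inl rfl)

/-- The set of old components (other than `{v}`) merged into `v`'s new component
when `v` is recolored to `c`. -/
abbrev mergedSet (c : α) : Type _ :=
  {C : (monoGraph G (chiZ χ v)).ConnectedComponent //
    C.map (Hom.ofLE (H0_le G χ v c)) =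
      (monoGraph G (Function.update χ v c)).connectedComponentMk v ∧
    C ≠ (monoGraph G (chiZ χ v)).connectedComponentMk v}

lemma count_split [Fintype V] (c : α) :
    Nat.card (monoGraph G (chiZ χ v)).ConnectedComponent =
      Nat.card (monoGraph G (Function.update χ v c)).ConnectedComponent +
        Nat.card (mergedSet G χ v c) := by
  classical
  set H0 := monoGraph G (chiZ χ v) with hH0
  set Hc := monoGraph G (Function.update χ v c) with hHc
  letI : Fintype H0.ConnectedComponent := Fintype.ofFinite _
  letI : Fintype Hc.ConnectedComponent := Fintype.ofFinite _
  set π : H0.ConnectedComponent → Hc.ConnectedComponent :=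
    ConnectedComponent.map (Hom.ofLE (H0_le G χ v c)) with hπ
  set X₀ := Hc.connectedComponentMk v with hX₀
  have hπmk : ∀ y : V, π (H0.connectedComponentMk y) = Hc.connectedComponentMk y :=
    fun y => rfl
  -- total count through fibers of π
  have hcard : Nat.card H0.ConnectedComponent
      = ∑ X : Hc.ConnectedComponent, Nat.card {C // π C = X} := by
    rw [← Nat.card_congr (Equiv.sigmaFiberEquiv π)]
    simp [Nat.card_eq_fintype_card]
  -- fibers away from X₀ are singletons
  have hfib1 : ∀ X : Hc.ConnectedComponent, X ≠ X₀ → Nat.card {C // π C = X} = 1 := by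
    intro X hX
    obtain ⟨x, rfl⟩ := X.exists_rep
    have hxv : ¬ Hc.Reachable x v := by
      intro hr
      exact hX (ConnectedComponent.sound hr)
    rw [Nat.card_eq_fintype_card, Fintype.card_eq_one_iff]
    refine ⟨⟨H0.connectedComponentMk x, hπmk x⟩, ?_⟩
    rintro ⟨C, hC⟩
    obtain ⟨y, rfl⟩ := C.exists_rep
    have hC' : Hc.connectedComponentMk y = Hc.connectedComponentMk x := hC
    have hyx : Hc.Reachable y x := ConnectedComponent.exact hC'
    obtain ⟨w⟩ := hyx
    have hyv : ¬ Hc.Reachable y v := fun hr => hxv ((ConnectedComponent.exact hC').symm.trans hr)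
    have : H0.Reachable y x := walk_avoid G χ v w hyv
    exact Subtype.ext (ConnectedComponent.sound this)
  -- the fiber over X₀ has card (merged) + 1
  have hfib0 : Nat.card {C // π C = X₀} = Nat.card (mergedSet G χ v c) + 1 := by
    have hmem : π (H0.connectedComponentMk v) = X₀ := hπmk v
    rw [Nat.card_eq_fintype_card, Fintype.card_subtype]
    have : Nat.card (mergedSet G χ v c) = ((Finset.univ.filter fun C => π C = X₀).erase
        (H0.connectedComponentMk v)).card := by
      rw [show mergedSet G χ v c = {C : H0.ConnectedComponent //
        π C = X₀ ∧ C ≠ H0.connectedComponentMk v} from rfl]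
      rw [Nat.card_eq_fintype_card, Fintype.card_subtype]
      congr 1
      ext C
      simp [Finset.mem_erase, and_comm]
    rw [this, Finset.card_erase_add_one (s := Finset.univ.filter fun C => π C = X₀)
      (a := H0.connectedComponentMk v) (Finset.mem_filter.2 ⟨Finset.mem_univ _, hmem⟩)]
  -- combine
  have hpos : 1 ≤ Fintype.card Hc.ConnectedComponent :=
    Fintype.card_pos_iff.2 ⟨X₀⟩
  rw [hcard, ← Finset.sum_erase_add _ _ (Finset.mem_univ X₀), hfib0]
  have hrest : ∑ X ∈ Finset.univ.erase X₀, Nat.card {C // π C = X}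
      = Fintype.card Hc.ConnectedComponent - 1 := by
    rw [Finset.sum_congr rfl fun X hX => hfib1 X (Finset.mem_erase.1 hX).1]
    simp [Finset.card_erase_of_mem]
  rw [hrest]
  simp only [Nat.card_eq_fintype_card]
  omega

/-- Each merged component contains a `G`-neighbor of `v` of color `c`. -/
lemma merged_nbr (c : α) (C : mergedSet G χ v c) :
    ∃ u, G.Adj v u ∧ χ u = c ∧ (monoGraph G (chiZ χ v)).connectedComponentMk u = C.1 := by
  obtain ⟨C, hC1, hC2⟩ := C
  obtain ⟨x, rfl⟩ := C.exists_rep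
  have hvx : (monoGraph G (Function.update χ v c)).Reachable v x :=
    (ConnectedComponent.exact hC1).symm
  rcases reach_from_v G χ v hvx with rfl | ⟨u, hu, hr⟩
  · exact absurd rfl hC2
  · obtain ⟨hadj, hcol⟩ := hu
    have huv : u ≠ v := fun h => G.loopless.irrefl v (h ▸ hadj)
    rw [Function.update_self, Function.update_of_ne huv] at hcol
    exact ⟨u, hadj, hcol.symm, ConnectedComponent.sound hr⟩

end Aux

/-- If `G` has maximum degree `Δ`, there are `D = Δ+1` colors, and `v` is conflicted
under `χ`, then recoloring `v` to a uniformly random color increases the expected number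
of monochromatic connected components by at least `1/D`. -/
theorem stmt_9 {V : Type*} [Fintype V] [DecidableEq V] (Δ : ℕ) (G : SimpleGraph V)
    [DecidableRel G.Adj] (hΔ : ∀ w, G.degree w ≤ Δ)
    (χ : V → Fin (Δ + 1)) (v : V) (hconf : ∃ u, G.Adj v u ∧ χ u = χ v) :
    (Phi G χ : ℝ) + 1 / ((Δ : ℝ) + 1)
      ≤ (∑ c : Fin (Δ + 1), (Phi G (Function.update χ v c) : ℝ)) / ((Δ : ℝ) + 1) := by
  classical
  set N := Nat.card (monoGraph G (chiZ χ v)).ConnectedComponent with hN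
  set k : Fin (Δ + 1) → ℕ := fun c => Nat.card (mergedSet G χ v c) with hk
  have hsplit : ∀ c, Phi G (Function.update χ v c) + k c = N := by
    intro c
    exact (count_split G χ v c).symm
  -- sum of merged counts is at most Δ
  have hmerged_le : ∑ c, k c ≤ Δ := by
    letI : ∀ c : Fin (Δ + 1), Fintype (mergedSet G χ v c) := fun c => Fintype.ofFinite _
    have hchoice : ∀ p : Σ c : Fin (Δ + 1), mergedSet G χ v c,
        ∃ u, G.Adj v u ∧ χ u = p.1 ∧
          (monoGraph G (chiZ χ v)).connectedComponentMk u = p.2.1 :=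
      fun p => merged_nbr G χ v p.1 p.2
    set F : (Σ c : Fin (Δ + 1), mergedSet G χ v c) → {u // G.Adj v u} :=
      fun p => ⟨Classical.choose (hchoice p), (Classical.choose_spec (hchoice p)).1⟩ with hF
    have hFinj : Function.Injective F := by
      rintro ⟨c₁, C₁⟩ ⟨c₂, C₂⟩ h
      have h1 := Classical.choose_spec (hchoice ⟨c₁, C₁⟩)
      have h2 := Classical.choose_spec (hchoice ⟨c₂, C₂⟩)
      have hu : Classical.choose (hchoice ⟨c₁, C₁⟩) = Classical.choose (hchoice ⟨c₂, C₂⟩) :=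
        congrArg Subtype.val h
      have e1 : χ (Classical.choose (hchoice ⟨c₁, C₁⟩)) = c₁ := h1.2.1
      have e2 : χ (Classical.choose (hchoice ⟨c₂, C₂⟩)) = c₂ := h2.2.1
      have f1 : (monoGraph G (chiZ χ v)).connectedComponentMk
          (Classical.choose (hchoice ⟨c₁, C₁⟩)) = C₁.1 := h1.2.2
      have f2 : (monoGraph G (chiZ χ v)).connectedComponentMk
          (Classical.choose (hchoice ⟨c₂, C₂⟩)) = C₂.1 := h2.2.2
      have hc : c₁ = c₂ := by rw [← e1, hu, e2]
      subst hc
      have hC : C₁ = C₂ := by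
        apply Subtype.ext
        rw [← f1, hu, f2]
      rw [hC]
    have hcards : Nat.card (Σ c : Fin (Δ + 1), mergedSet G χ v c) ≤ Nat.card {u // G.Adj v u} :=
      Nat.card_le_card_of_injective F hFinj
    have hdeg : Nat.card {u // G.Adj v u} = G.degree v := by
      rw [Nat.card_eq_fintype_card]
      exact G.card_neighborSet_eq_degree v
    have hsig : Nat.card (Σ c : Fin (Δ + 1), mergedSet G χ v c) = ∑ c, k c := by
      simp [Nat.card_eq_fintype_card, hk]
    rw [hsig, hdeg] at hcards
    exact hcards.trans (hΔ v)
  -- the merged count for v's own color is at least 1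
  have hk1 : 1 ≤ k (χ v) := by
    obtain ⟨u, hadj, hcol⟩ := hconf
    have huv : u ≠ v := fun h => G.loopless.irrefl v (h ▸ hadj)
    have hAdj : (monoGraph G (Function.update χ v (χ v))).Adj v u := by
      refine ⟨hadj, ?_⟩
      rw [Function.update_self, Function.update_of_ne huv, hcol]
    have hne : (monoGraph G (chiZ χ v)).connectedComponentMk u ≠
        (monoGraph G (chiZ χ v)).connectedComponentMk v := by
      intro h
      exact huv (H0_reach_v G χ v (ConnectedComponent.exact h).symm)
    have hmap : ((monoGraph G (chiZ χ v)).connectedComponentMk u).map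
        (Hom.ofLE (H0_le G χ v (χ v))) =
        (monoGraph G (Function.update χ v (χ v))).connectedComponentMk v := by
      exact ConnectedComponent.sound hAdj.symm.reachable
    have : Nonempty (mergedSet G χ v (χ v)) :=
      ⟨⟨(monoGraph G (chiZ χ v)).connectedComponentMk u, hmap, hne⟩⟩
    have hfin : Finite (mergedSet G χ v (χ v)) := by
      unfold mergedSet; infer_instance
    exact Nat.one_le_iff_ne_zero.2 (Nat.card_ne_zero.2 ⟨this, hfin⟩)
  have hPhiχ : Phi G χ = Phi G (Function.update χ v (χ v)) := by
    rw [Function.update_eq_self]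
  -- arithmetic
  have hn1 : (Δ + 1) * Phi G χ + 1 ≤ ∑ c, Phi G (Function.update χ v c) := by
    have hstep1 : ∑ c, k c + 1 ≤ (Δ + 1) * k (χ v) :=
      le_trans (by omega) (Nat.le_mul_of_pos_right _ hk1)
    have hstep2 : (Δ + 1) * Phi G χ + (Δ + 1) * k (χ v)
        = ∑ c, Phi G (Function.update χ v c) + ∑ c, k c := by
      rw [← Finset.sum_add_distrib, Finset.sum_congr rfl fun c _ => hsplit c,
        hPhiχ, ← Nat.mul_add, hsplit (χ v)]
      simp [Finset.sum_const, Finset.card_univ, Nat.mul_comm]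
    omega
  have hD : (0 : ℝ) < (Δ : ℝ) + 1 := by positivity
  have hcast : ((Δ : ℝ) + 1) * (Phi G χ : ℝ) + 1
      ≤ ∑ c, (Phi G (Function.update χ v c) : ℝ) := by
    have h := (Nat.cast_le (α := ℝ)).2 hn1
    push_cast at h
    linarith
  rw [le_div_iff₀ hD]
  have hexp : ((Phi G χ : ℝ) + 1 / ((Δ : ℝ) + 1)) * ((Δ : ℝ) + 1)
      = ((Δ : ℝ) + 1) * (Phi G χ : ℝ) + 1 := by
    field_simp
  rw [hexp]
  exact hcast
end

section
/- There exists a family of graphs and initial colorings for which Persistent Decentralized Coloring with adversarial start and random order requires Ω(nΔ) expected recolorings: on the complete bipartite graph K_{Δ,Δ} with all left vertices colored green and the right vertices using Δ distinct colors including green, the expected total number of recolorings is at least c·Δ² for an absolute constant c > 0. -/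
/-- Vertex `v` is conflicted under `χ`: some neighbor shares its color. -/
def Conflicted {V : Type*} {D : ℕ} (G : SimpleGraph V) (χ : V → Fin D) (v : V) : Prop :=
  ∃ u, G.Adj v u ∧ χ u = χ v

/-- Advance the processing position past unconflicted vertices: starting from position
`k` in the order `σ`, return the first position `≥ k` whose vertex is currently
conflicted, or `n` if there is none. -/
noncomputable def advance {V : Type*} {D : ℕ} (G : SimpleGraph V) (n : ℕ)
    (σ : Fin n ≃ V) (χ : V → Fin D) (k : ℕ) : ℕ :=
  if h : k < n then
    letI : Decidable (Conflicted G χ (σ ⟨k, h⟩)) := Classical.propDecidable _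
    if Conflicted G χ (σ ⟨k, h⟩) then k else advance G n σ χ (k + 1)
  else k
termination_by n - k
decreasing_by omega

/-- One recoloring step of Persistent Decentralized Coloring: advance to the currently
processed (conflicted) vertex and give it the (random) color `c`; if every remaining
vertex is unconflicted, do nothing.  The state is (current coloring, current position). -/
noncomputable def pStep {V : Type*} {D : ℕ} (G : SimpleGraph V) (n : ℕ)
    (σ : Fin n ≃ V) (s : (V → Fin D) × ℕ) (c : Fin D) : (V → Fin D) × ℕ :=
  let k := advance G n σ s.1 s.2
  if h : k < n then
    letI : DecidableEq V := Classical.decEq V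
    (Function.update s.1 (σ ⟨k, h⟩) c, k)
  else s

/-- The state of the process after consuming the list `l` of random colors. -/
noncomputable def pRun {V : Type*} {D : ℕ} (G : SimpleGraph V) (n : ℕ)
    (σ : Fin n ≃ V) (χ0 : V → Fin D) (l : List (Fin D)) : (V → Fin D) × ℕ :=
  l.foldl (pStep G n σ) (χ0, 0)

/-- The (advanced) processing position after consuming `l`; it equals `n` iff the
process has terminated within `l`. -/
noncomputable def pPos {V : Type*} {D : ℕ} (G : SimpleGraph V) (n : ℕ)
    (σ : Fin n ≃ V) (χ0 : V → Fin D) (l : List (Fin D)) : ℕ :=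
  advance G n σ (pRun G n σ χ0 l).1 (pRun G n σ χ0 l).2

/-- The expected total number of recolorings of Persistent Decentralized Coloring with
order `σ` and initial coloring `χ0`, expressed as `∑_{t≥0} P(more than t recolorings)`,
the probability being over the `t` uniformly random colors consumed so far. -/
noncomputable def expectedTotal {V : Type*} {D : ℕ} (G : SimpleGraph V) (n : ℕ)
    (σ : Fin n ≃ V) (χ0 : V → Fin D) : ℝ :=
  ∑' t : ℕ, (Nat.card {f : Fin t → Fin D // pPos G n σ χ0 (List.ofFn f) ≠ n} : ℝ)
    / (D : ℝ) ^ t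

/-- The expected number of recolorings performed by the vertex `v`, expressed as
`∑_{t≥0} P(the (t+1)-st random color is consumed by v)`. -/
noncomputable def expectedRecolors {V : Type*} {D : ℕ} (G : SimpleGraph V) (n : ℕ)
    (σ : Fin n ≃ V) (χ0 : V → Fin D) (v : V) : ℝ :=
  ∑' t : ℕ, (Nat.card {f : Fin t → Fin D //
      pPos G n σ χ0 (List.ofFn f) = (σ.symm v : ℕ)} : ℝ) / (D : ℝ) ^ t

/-!
Let `L(σ)` be the number of left vertices that the order `σ` places before the right vertex
of color `0`. Each of them is conflicted with that vertex when it is processed, and its only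
free color is `Δ`, so it is resampled until it draws `Δ`. Hence the process is still running
while fewer than `L(σ)` of the random colors equal `Δ`; by Markov's inequality this has
probability at least `1 - t / (L(σ)(Δ + 1))` after `t` steps, so the expected number of
recolorings is at least `L(σ)(Δ + 1) / 2`. Reversing `σ` turns `L(σ)` into `Δ - L(σ)`, so
`L` averages `Δ / 2`.

The expected number is a genuine (summable) series: every vertex always has a free color,
so from any state some `n` colors end the pass, and the survival probability decays
geometrically over blocks of `n` steps.
-/

section Advance

variable {V : Type*} {D : ℕ} (G : SimpleGraph V) {n : ℕ} (σ : Fin n ≃ V) (χ : V → Fin D)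

lemma advance_of_conflicted {k : ℕ} (hk : k < n) (h : Conflicted G χ (σ ⟨k, hk⟩)) :
    advance G n σ χ k = k := by
  rw [advance, dif_pos hk]
  exact if_pos h

lemma advance_of_not_conflicted {k : ℕ} (hk : k < n) (h : ¬ Conflicted G χ (σ ⟨k, hk⟩)) :
    advance G n σ χ k = advance G n σ χ (k + 1) := by
  rw [advance, dif_pos hk]
  exact if_neg h

lemma advance_of_le {k : ℕ} (hk : n ≤ k) : advance G n σ χ k = k := by
  rw [advance, dif_neg (by omega)]

lemma le_advance (k : ℕ) : k ≤ advance G n σ χ k := by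
  induction k using advance.induct G n σ χ with
  | case1 k hk h => rw [advance_of_conflicted G σ χ hk h]
  | case2 k hk h ih => rw [advance_of_not_conflicted G σ χ hk h]; omega
  | case3 k hk => rw [advance_of_le G σ χ (by omega)]

lemma advance_le {k : ℕ} (hk : k ≤ n) : advance G n σ χ k ≤ n := by
  induction k using advance.induct G n σ χ with
  | case1 k hk' h => rw [advance_of_conflicted G σ χ hk' h]; omega
  | case2 k hk' h ih => rw [advance_of_not_conflicted G σ χ hk' h]; exact ih (by omega)
  | case3 k hk' => rw [advance_of_le G σ χ (by omega)]; omega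

lemma conflicted_advance {k : ℕ} (h : advance G n σ χ k < n) :
    Conflicted G χ (σ ⟨advance G n σ χ k, h⟩) := by
  induction k using advance.induct G n σ χ with
  | case1 k hk hc => simpa only [advance_of_conflicted G σ χ hk hc] using hc
  | case2 k hk hc ih =>
    simp only [advance_of_not_conflicted G σ χ hk hc] at h ⊢
    exact ih h
  | case3 k hk => simp only [advance_of_le G σ χ (not_lt.1 hk)] at h; omega

lemma not_conflicted_of_lt_advance {k : ℕ} (p : Fin n) (hkp : k ≤ p)
    (hp : (p : ℕ) < advance G n σ χ k) : ¬ Conflicted G χ (σ p) := by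
  induction k using advance.induct G n σ χ with
  | case1 k hk hc => rw [advance_of_conflicted G σ χ hk hc] at hp; omega
  | case2 k hk hc ih =>
    rw [advance_of_not_conflicted G σ χ hk hc] at hp
    rcases hkp.eq_or_lt with rfl | hlt
    · exact hc
    · exact ih hlt hp
  | case3 k hk => omega

lemma advance_le_of_conflicted {k : ℕ} (p : Fin n) (hkp : k ≤ p) (h : Conflicted G χ (σ p)) :
    advance G n σ χ k ≤ p :=
  not_lt.1 fun hp => not_conflicted_of_lt_advance G σ χ p hkp hp h

end Advance

section Run

variable {V : Type*} {D : ℕ} (G : SimpleGraph V) {n : ℕ} (σ : Fin n ≃ V)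

lemma pStep_of_advance_eq [DecidableEq V] {s : (V → Fin D) × ℕ} {p : Fin n}
    (h : advance G n σ s.1 s.2 = p) (c : Fin D) :
    pStep G n σ s c = (Function.update s.1 (σ p) c, (p : ℕ)) := by
  unfold pStep
  simp only [h, p.isLt, dite_true, Fin.eta]
  congr
  exact Subsingleton.elim _ _

lemma pStep_of_advance_eq_self {s : (V → Fin D) × ℕ} (h : advance G n σ s.1 s.2 = n)
    (c : Fin D) : pStep G n σ s c = s := by
  unfold pStep
  simp only [h, lt_self_iff_false, dite_false]

lemma pRun_append (χ0 : V → Fin D) (l l' : List (Fin D)) :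
    pRun G n σ χ0 (l ++ l') = l'.foldl (pStep G n σ) (pRun G n σ χ0 l) :=
  List.foldl_append

lemma pPos_append_of_eq {χ0 : V → Fin D} {l : List (Fin D)} (h : pPos G n σ χ0 l = n)
    (l' : List (Fin D)) : pPos G n σ χ0 (l ++ l') = n := by
  induction l' using List.reverseRecOn with
  | nil => simpa using h
  | append_singleton l' c ih =>
    unfold pPos at ih ⊢
    rw [← List.append_assoc, pRun_append, List.foldl_cons, List.foldl_nil,
      pStep_of_advance_eq_self G σ ih, ih]

lemma pRun_snd_le (χ0 : V → Fin D) (l : List (Fin D)) : (pRun G n σ χ0 l).2 ≤ n := by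
  induction l using List.reverseRecOn with
  | nil => exact Nat.zero_le n
  | append_singleton l c ih =>
    rw [pRun_append, List.foldl_cons, List.foldl_nil]
    dsimp only [pStep]
    split_ifs with h
    · exact h.le
    · exact ih

lemma not_conflicted_update [DecidableEq V] {χ : V → Fin D} {v : V} {c : Fin D}
    (hc : ∀ u, G.Adj v u → χ u ≠ c) : ¬ Conflicted G (Function.update χ v c) v := by
  rintro ⟨u, hadj, heq⟩
  rw [Function.update_of_ne hadj.ne', Function.update_self] at heq
  exact hc u hadj heq

/-- Each step giving the processed vertex a free color moves the position forward. -/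
lemma exists_advance_foldl_eq [NeZero n]
    (hfree : ∀ (χ : V → Fin D) v, ∃ c, ∀ u, G.Adj v u → χ u ≠ c) (m : ℕ)
    {s : (V → Fin D) × ℕ} (hs : s.2 ≤ n) (hm : n - advance G n σ s.1 s.2 ≤ m) :
    ∃ w : Fin m → Fin D,
      advance G n σ ((List.ofFn w).foldl (pStep G n σ) s).1
        ((List.ofFn w).foldl (pStep G n σ) s).2 = n := by
  classical
  have hle := advance_le G σ s.1 hs
  induction m generalizing s with
  | zero => exact ⟨Fin.elim0, by simp; omega⟩
  | succ m ih =>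
    by_cases hlt : advance G n σ s.1 s.2 < n
    · let p : Fin n := ⟨_, hlt⟩
      obtain ⟨c, hc⟩ := hfree s.1 (σ p)
      have hstep := pStep_of_advance_eq G σ (p := p) rfl c
      have hnext : advance G n σ s.1 s.2 <
          advance G n σ (pStep G n σ s c).1 (pStep G n σ s c).2 := by
        rw [hstep, advance_of_not_conflicted G σ _ p.isLt (not_conflicted_update G hc)]
        exact le_advance G σ _ _
      have hs' : (pStep G n σ s c).2 ≤ n := by rw [hstep]; exact p.isLt.le
      obtain ⟨w, hw⟩ := ih hs' (by omega) (advance_le G σ _ hs')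
      exact ⟨Fin.cons c w, by simpa [List.ofFn_succ] using hw⟩
    · obtain ⟨c, -⟩ := hfree s.1 (σ 0)
      have hterm : advance G n σ s.1 s.2 = n := by omega
      obtain ⟨w, hw⟩ := ih hs (by omega) hle
      exact ⟨Fin.cons c w, by simpa [List.ofFn_succ, pStep_of_advance_eq_self G σ hterm] using hw⟩

lemma exists_pPos_append_eq [NeZero n]
    (hfree : ∀ (χ : V → Fin D) v, ∃ c, ∀ u, G.Adj v u → χ u ≠ c) (χ0 : V → Fin D)
    (l : List (Fin D)) : ∃ w : Fin n → Fin D, pPos G n σ χ0 (l ++ List.ofFn w) = n := by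
  obtain ⟨w, hw⟩ := exists_advance_foldl_eq G σ hfree n (pRun_snd_le G σ χ0 l) (Nat.sub_le _ _)
  exact ⟨w, by rw [pPos, pRun_append]; exact hw⟩

end Run

section Survival

open Finset

variable {D : ℕ} (P : List (Fin D) → Prop)

/-- With `P` = "not yet terminated" this is `P(T > t)` for the number `T` of recolorings, and
`expectedTotal` is `∑' t, survivalProb P t`. -/
noncomputable def survivalProb (t : ℕ) : ℝ :=
  (Nat.card {f : Fin t → Fin D // P (List.ofFn f)} : ℝ) / (D : ℝ) ^ t

lemma survivalProb_nonneg (t : ℕ) : 0 ≤ survivalProb P t := by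
  unfold survivalProb
  positivity

lemma survivalProb_le_one (t : ℕ) : survivalProb P t ≤ 1 := by
  refine div_le_one_of_le₀ ?_ (by positivity)
  have := Finite.card_subtype_le (fun f : Fin t → Fin D => P (List.ofFn f))
  rw [Nat.card_fun, Nat.card_fin, Nat.card_fin] at this
  exact_mod_cast this

lemma card_survivors_add_le (hpre : ∀ l l', P (l ++ l') → P l) {m : ℕ}
    (hkill : ∀ l, ∃ w : Fin m → Fin D, ¬ P (l ++ List.ofFn w)) (t : ℕ) :
    Nat.card {f : Fin (t + m) → Fin D // P (List.ofFn f)} ≤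
      Nat.card {f : Fin t → Fin D // P (List.ofFn f)} * (D ^ m - 1) := by
  classical
  simp only [Nat.card_eq_fintype_card, Fintype.card_subtype]
  calc #{f : Fin (t + m) → Fin D | P (List.ofFn f)}
      ≤ #(({a : Fin t → Fin D | P (List.ofFn a)} : Finset _).biUnion fun a =>
          ({b : Fin m → Fin D | P (List.ofFn a ++ List.ofFn b)} : Finset _).image
            (Fin.append a)) := by
        refine card_le_card fun f hf => ?_
        have hsplit : List.ofFn f = List.ofFn (fun i => f (Fin.castAdd m i)) ++
            List.ofFn (fun i => f (Fin.natAdd t i)) := by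
          rw [← List.ofFn_fin_append, Fin.append_castAdd_natAdd]
        rw [mem_filter, hsplit] at hf
        simp only [mem_biUnion, mem_filter, mem_univ, true_and,
          mem_image]
        exact ⟨_, hpre _ _ hf.2, _, hf.2, Fin.append_castAdd_natAdd⟩
    _ ≤ ∑ a ∈ {a : Fin t → Fin D | P (List.ofFn a)},
          #{b : Fin m → Fin D | P (List.ofFn a ++ List.ofFn b)} :=
        card_biUnion_le.trans (sum_le_sum fun _ _ => card_image_le)
    _ ≤ ∑ a ∈ {a : Fin t → Fin D | P (List.ofFn a)}, (D ^ m - 1) := by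
        refine sum_le_sum fun a _ => ?_
        obtain ⟨w, hw⟩ := hkill (List.ofFn a)
        have := card_lt_card (filter_ssubset.2 ⟨w, mem_univ _, hw⟩ :
          ({b : Fin m → Fin D | P (List.ofFn a ++ List.ofFn b)} : Finset _) ⊂ univ)
        simp only [card_univ, Fintype.card_fun, Fintype.card_fin] at this
        omega
    _ = _ := by rw [sum_const, smul_eq_mul]

lemma survivalProb_add_le (hD : 0 < D) (hpre : ∀ l l', P (l ++ l') → P l) {m : ℕ}
    (hkill : ∀ l, ∃ w : Fin m → Fin D, ¬ P (l ++ List.ofFn w)) (t : ℕ) :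
    survivalProb P (t + m) ≤ (1 - ((D : ℝ) ^ m)⁻¹) * survivalProb P t := by
  have hcard : (Nat.card {f : Fin (t + m) → Fin D // P (List.ofFn f)} : ℝ) ≤
      Nat.card {f : Fin t → Fin D // P (List.ofFn f)} * ((D : ℝ) ^ m - 1) := by
    have := card_survivors_add_le P hpre hkill t
    rw [← Nat.cast_le (α := ℝ), Nat.cast_mul, Nat.cast_sub (Nat.one_le_pow _ _ hD)] at this
    simpa using this
  unfold survivalProb
  have hDpos : (0 : ℝ) < D := by exact_mod_cast hD
  calc _ ≤ Nat.card {f : Fin t → Fin D // P (List.ofFn f)} * ((D : ℝ) ^ m - 1) /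
        (D : ℝ) ^ (t + m) := div_le_div_of_nonneg_right hcard (by positivity)
    _ = _ := by field_simp; ring

/-- Geometric decay over blocks of length `m`: from every prefix some block of `m` colors
leads out of `P`, so each block keeps at most a fraction `1 - D⁻ᵐ` of the survivors. -/
lemma summable_survivalProb (hpre : ∀ l l', P (l ++ l') → P l) {m : ℕ} [NeZero m]
    (hkill : ∀ l, ∃ w : Fin m → Fin D, ¬ P (l ++ List.ofFn w)) :
    Summable (survivalProb P) := by
  have hD : 0 < D := ((hkill []).choose 0).pos
  set θ : ℝ := 1 - ((D : ℝ) ^ m)⁻¹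
  have hθ0 : 0 ≤ θ := sub_nonneg.2 (inv_le_one_of_one_le₀ (one_le_pow₀ (by exact_mod_cast hD)))
  have hθ1 : θ < 1 := sub_lt_self _ (by positivity)
  have hblock : ∀ k r, survivalProb P (k * m + r) ≤ θ ^ k := by
    intro k r
    induction k with
    | zero => simpa using survivalProb_le_one P r
    | succ k ih =>
      calc survivalProb P ((k + 1) * m + r) = survivalProb P ((k * m + r) + m) := by ring_nf
        _ ≤ θ * survivalProb P (k * m + r) := survivalProb_add_le P hD hpre hkill _
        _ ≤ θ * θ ^ k := mul_le_mul_of_nonneg_left ih hθ0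
        _ = θ ^ (k + 1) := (pow_succ' θ k).symm
  rw [← (Nat.divModEquiv m).symm.summable_iff]
  refine Summable.of_nonneg_of_le (fun _ => survivalProb_nonneg P _) (fun p => ?_)
    ((summable_geometric_of_lt_one hθ0 hθ1).mul_of_nonneg
      (Summable.of_finite (f := fun _ : Fin m => (1 : ℝ))) (fun _ => pow_nonneg hθ0 _)
      fun _ => zero_le_one)
  simpa using hblock p.1 p.2

end Survival

section Markov

open Finset

variable {D : ℕ}

lemma sum_count_ofFn_mul (a : Fin D) (t : ℕ) :
    (∑ f : Fin t → Fin D, (List.ofFn f).count a) * D = t * D ^ t := by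
  induction t with
  | zero => simp
  | succ t ih =>
    rw [← (Fin.consEquiv fun _ => Fin D).sum_comp, Fintype.sum_prod_type]
    simp only [Fin.consEquiv_apply, List.ofFn_succ, Fin.cons_zero, Fin.cons_succ,
      List.count_cons, beq_iff_eq, sum_add_distrib, sum_const, card_univ, Fintype.card_fun,
      Fintype.card_fin, smul_eq_mul, mul_ite, mul_one, mul_zero, sum_ite_eq', mem_univ, if_true]
    rw [add_mul, mul_assoc, ih]
    ring

variable (P : List (Fin D) → Prop)

lemma one_sub_div_le_survivalProb (a : Fin D) {L : ℕ} (hL : 0 < L)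
    (hP : ∀ l, l.count a < L → P l) (t : ℕ) :
    1 - (t : ℝ) / (L * D) ≤ survivalProb P t := by
  have hD : 0 < D := a.pos
  set S : Finset (Fin t → Fin D) := {f | L ≤ (List.ofFn f).count a}
  have hsurv : D ^ t ≤ Nat.card {f : Fin t → Fin D // P (List.ofFn f)} + #S := by
    have hsplit : #S + #({f | ¬ L ≤ (List.ofFn f).count a} : Finset (Fin t → Fin D)) = D ^ t := by
      rw [card_filter_add_card_filter_not]
      simp
    have hsub : Nat.card {f : Fin t → Fin D // ¬ L ≤ (List.ofFn f).count a} ≤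
        Nat.card {f : Fin t → Fin D // P (List.ofFn f)} :=
      Nat.card_le_card_of_injective (Subtype.map id fun f hf => hP _ (not_le.1 hf))
        (Subtype.map_injective _ Function.injective_id)
    rw [Nat.card_eq_fintype_card, Fintype.card_subtype] at hsub
    omega
  have hmarkov : L * #S * D ≤ t * D ^ t := by
    rw [← sum_count_ofFn_mul a t]
    refine Nat.mul_le_mul_right _ ?_
    calc L * #S = #S • L := by rw [smul_eq_mul, mul_comm]
      _ ≤ ∑ f ∈ S, (List.ofFn f).count a := card_nsmul_le_sum _ _ _ fun f hf => (mem_filter.1 hf).2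
      _ ≤ ∑ f, (List.ofFn f).count a := sum_le_sum_of_subset (subset_univ _)
  have hS : (#S : ℝ) ≤ t / (L * D) * (D : ℝ) ^ t := by
    rw [div_mul_eq_mul_div, le_div_iff₀ (by positivity)]
    exact_mod_cast (by linarith : #S * (L * D) ≤ t * D ^ t)
  have hpow : (0 : ℝ) < (D : ℝ) ^ t := by positivity
  unfold survivalProb
  rw [le_div_iff₀ hpow]
  have : ((D ^ t : ℕ) : ℝ) ≤ Nat.card {f : Fin t → Fin D // P (List.ofFn f)} + #S := by
    exact_mod_cast hsurv
  push_cast at this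
  nlinarith

lemma le_tsum_survivalProb (hs : Summable (survivalProb P)) (a : Fin D) (L : ℕ)
    (hP : ∀ l, l.count a < L → P l) :
    (L * D : ℝ) / 2 ≤ ∑' t, survivalProb P t := by
  rcases L.eq_zero_or_pos with rfl | hL
  · simpa using tsum_nonneg (survivalProb_nonneg P)
  set K := L * D
  have hK : 0 < K := Nat.mul_pos hL a.pos
  have hgauss : (∑ t ∈ range K, (t : ℝ)) * 2 = K * (K - 1) := by
    have := congrArg (Nat.cast (R := ℝ)) (sum_range_id_mul_two K)
    push_cast [Nat.cast_sub hK] at this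
    exact this
  calc (L * D : ℝ) / 2 ≤ ∑ t ∈ range K, (1 - (t : ℝ) / K) := by
        rw [sum_sub_distrib, ← sum_div, sum_const, card_range, nsmul_eq_mul, mul_one]
        have hKr : (0 : ℝ) < K := by exact_mod_cast hK
        rw [show (L * D : ℝ) = K by push_cast [K]; ring]
        rw [le_sub_iff_add_le, div_add_div _ _ (two_ne_zero) hKr.ne', div_le_iff₀ (by positivity)]
        nlinarith
    _ ≤ ∑ t ∈ range K, survivalProb P t := sum_le_sum fun t _ => by
        simpa [K] using one_sub_div_le_survivalProb P a hL hP t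
    _ ≤ ∑' t, survivalProb P t := hs.sum_le_tsum _ fun t _ => survivalProb_nonneg P t

end Markov

section CompleteBipartite

variable {V W : Type*} {D : ℕ}

lemma conflicted_completeBipartiteGraph_inl_iff (χ : V ⊕ W → Fin D) (x : V) :
    Conflicted (completeBipartiteGraph V W) χ (.inl x) ↔ ∃ i, χ (.inr i) = χ (.inl x) := by
  simp [Conflicted, completeBipartiteGraph]

lemma conflicted_completeBipartiteGraph_inr_iff (χ : V ⊕ W → Fin D) (i : W) :
    Conflicted (completeBipartiteGraph V W) χ (.inr i) ↔ ∃ x, χ (.inl x) = χ (.inr i) := by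
  simp [Conflicted, completeBipartiteGraph]

/-- The neighbours of a vertex of `K_{Δ,Δ}` see at most `Δ` of the `Δ + 1` colors. -/
lemma exists_free_color {Δ : ℕ} (χ : Fin Δ ⊕ Fin Δ → Fin (Δ + 1)) (v : Fin Δ ⊕ Fin Δ) :
    ∃ c, ∀ u, (completeBipartiteGraph (Fin Δ) (Fin Δ)).Adj v u → χ u ≠ c := by
  have hmiss : ∀ g : Fin Δ → Fin (Δ + 1), ∃ c, ∀ i, g i ≠ c := by
    intro g
    by_contra! h
    simpa using Fintype.card_le_of_surjective g fun c => (h c)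
  rcases v with x | x
  · obtain ⟨c, hc⟩ := hmiss (χ ∘ Sum.inr)
    exact ⟨c, by rintro (y | i) hadj <;> simp_all⟩
  · obtain ⟨c, hc⟩ := hmiss (χ ∘ Sum.inl)
    exact ⟨c, by rintro (y | i) hadj <;> simp_all⟩

end CompleteBipartite

namespace GreenStart

open Finset

abbrev graph (Δ : ℕ) : SimpleGraph (Fin Δ ⊕ Fin Δ) := completeBipartiteGraph (Fin Δ) (Fin Δ)

def init (Δ : ℕ) : Fin Δ ⊕ Fin Δ → Fin (Δ + 1) := Sum.elim (fun _ => 0) (fun i => i.castSucc)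

variable {Δ : ℕ} (σ : Fin (2 * Δ) ≃ (Fin Δ ⊕ Fin Δ))

def leftPos (x : Fin Δ) : ℕ := σ.symm (.inl x)

def leftBefore (k : ℕ) : ℕ := #{x | leftPos σ x < k}

/-- The coloring once the left vertices before position `k` have found their free color. -/
def stageColoring (k : ℕ) : Fin Δ ⊕ Fin Δ → Fin (Δ + 1) :=
  Sum.elim (fun x => if leftPos σ x < k then Fin.last Δ else 0) (fun i => i.castSucc)

lemma leftPos_lt (x : Fin Δ) : leftPos σ x < 2 * Δ := (σ.symm (.inl x)).isLt

lemma leftPos_inj {x y : Fin Δ} : leftPos σ x = leftPos σ y ↔ x = y := by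
  simp [leftPos, Fin.val_inj]

lemma apply_leftPos (x : Fin Δ) : σ ⟨leftPos σ x, leftPos_lt σ x⟩ = .inl x := by
  simp [leftPos]

lemma leftBefore_leftPos_succ (x : Fin Δ) :
    leftBefore σ (leftPos σ x + 1) = leftBefore σ (leftPos σ x) + 1 := by
  unfold leftBefore
  rw [← card_insert_of_notMem (s := {y | leftPos σ y < leftPos σ x}) (a := x) (by simp)]
  congr 1
  ext y
  simp [le_iff_eq_or_lt, leftPos_inj]

lemma stageColoring_zero : stageColoring σ 0 = init Δ := by
  funext v
  rcases v with x | i <;> simp [stageColoring, init]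

lemma update_stageColoring_last (x : Fin Δ) :
    Function.update (stageColoring σ (leftPos σ x)) (.inl x) (Fin.last Δ) =
      stageColoring σ (leftPos σ x + 1) := by
  funext v
  rcases v with y | i
  · rcases eq_or_ne y x with rfl | hyx
    · simp [stageColoring]
    · have : leftPos σ y ≠ leftPos σ x := (leftPos_inj σ).not.2 hyx
      simp [stageColoring, Function.update_of_ne (Sum.inl_injective.ne hyx),
        this.le_iff_lt]
  · simp [stageColoring]

lemma conflicted_inl_iff {χ : Fin Δ ⊕ Fin Δ → Fin (Δ + 1)} (hχ : ∀ i, χ (.inr i) = i.castSucc)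
    (x : Fin Δ) : Conflicted (graph Δ) χ (.inl x) ↔ χ (.inl x) ≠ Fin.last Δ := by
  simp [conflicted_completeBipartiteGraph_inl_iff, hχ, Fin.exists_castSucc_eq]

variable [NeZero Δ]

/-- The number of left vertices processed before the right vertex of color `0`: each of them
is conflicted with it and has `Fin.last Δ` as its only free color. -/
def leftBeforeGreen : ℕ := leftBefore σ (σ.symm (.inr 0))

lemma not_conflicted_stageColoring_inr (k : ℕ) {i : Fin Δ} (hi : i ≠ 0) :
    ¬ Conflicted (graph Δ) (stageColoring σ k) (.inr i) := by
  rw [conflicted_completeBipartiteGraph_inr_iff]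
  rintro ⟨x, hx⟩
  simp only [stageColoring, Sum.elim_inl, Sum.elim_inr] at hx
  split_ifs at hx
  · exact (Fin.castSucc_lt_last i).ne hx.symm
  · exact hi (Fin.castSucc_eq_zero_iff.1 hx.symm)

/-- The process is at a left vertex `x`; the left vertices before it hold `Fin.last Δ`, one for
each draw of that color so far. -/
def Waiting (l : List (Fin (Δ + 1))) : Prop :=
  ∃ x c, pPos (graph Δ) (2 * Δ) σ (init Δ) l = leftPos σ x ∧
    (pRun (graph Δ) (2 * Δ) σ (init Δ) l).1 =
      Function.update (stageColoring σ (leftPos σ x)) (.inl x) c ∧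
    l.count (Fin.last Δ) = leftBefore σ (leftPos σ x)

/-- Some left vertex lies between `k` and the green vertex and is conflicted, so the pass stops
before the green vertex, where only left vertices can be conflicted. -/
lemma exists_advance_stageColoring {k : ℕ} (hk : leftBefore σ k < leftBeforeGreen σ) :
    ∃ x, advance (graph Δ) (2 * Δ) σ (stageColoring σ k) k = leftPos σ x ∧
      ∀ y, leftPos σ y < leftPos σ x ↔ leftPos σ y < k := by
  set χ := stageColoring σ k
  have hconf : ∀ y, k ≤ leftPos σ y → Conflicted (graph Δ) χ (.inl y) := fun y hy => by
    rw [conflicted_inl_iff (fun _ => rfl)]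
    simp [χ, stageColoring, hy.not_gt, Fin.ext_iff, (NeZero.ne Δ).symm]
  obtain ⟨y, hky, hyg⟩ : ∃ y, k ≤ leftPos σ y ∧ leftPos σ y < σ.symm (.inr 0) := by
    by_contra! h
    apply hk.not_ge
    unfold leftBeforeGreen leftBefore
    refine card_le_card fun y hy => ?_
    simp only [mem_filter, mem_univ, true_and] at hy ⊢
    by_contra! hky
    exact (h y hky).not_gt hy
  set p := advance (graph Δ) (2 * Δ) σ χ k
  have hpg : p < σ.symm (.inr 0) :=
    (advance_le_of_conflicted _ σ χ (σ.symm (.inl y)) hky (by simpa using hconf y hky)).trans_lt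
      hyg
  have hpn : p < 2 * Δ := hpg.trans (σ.symm _).isLt
  obtain ⟨x, hx⟩ : ∃ x, σ ⟨p, hpn⟩ = .inl x := by
    have hc := conflicted_advance _ σ χ hpn
    rcases hσ : σ ⟨p, hpn⟩ with x | i
    · exact ⟨x, rfl⟩
    · rw [hσ] at hc
      have hi : i ≠ 0 := by
        rintro rfl
        rw [← Equiv.eq_symm_apply] at hσ
        exact hpg.ne (congrArg Fin.val hσ)
      exact absurd hc (not_conflicted_stageColoring_inr σ k hi)
  have hpx : p = leftPos σ x := by simp [leftPos, ← hx]
  refine ⟨x, hpx, fun y => ⟨fun h => ?_, fun h => h.trans_le (hpx ▸ le_advance _ σ χ k)⟩⟩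
  by_contra! hky
  exact not_conflicted_of_lt_advance _ σ χ (σ.symm (.inl y)) hky (hpx ▸ h)
    (by simpa using hconf y hky)

lemma waiting_of_stage {l : List (Fin (Δ + 1))} {k : ℕ}
    (hk : leftBefore σ k < leftBeforeGreen σ)
    (hrun : (pRun (graph Δ) (2 * Δ) σ (init Δ) l).1 = stageColoring σ k)
    (hpos : pPos (graph Δ) (2 * Δ) σ (init Δ) l =
      advance (graph Δ) (2 * Δ) σ (stageColoring σ k) k)
    (hcount : l.count (Fin.last Δ) = leftBefore σ k) : Waiting σ l := by
  obtain ⟨x, hpx, hbefore⟩ := exists_advance_stageColoring σ hk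
  have hstage : stageColoring σ (leftPos σ x) = stageColoring σ k := by
    funext v
    rcases v with z | i <;> simp [stageColoring, hbefore]
  refine ⟨x, 0, hpos.trans hpx, ?_, ?_⟩
  · rw [hrun, hstage, eq_comm, Function.update_eq_self_iff]
    simp [stageColoring, ← hbefore]
  · rw [hcount, leftBefore, leftBefore]
    simp only [hbefore]

lemma waiting_nil (h : 0 < leftBeforeGreen σ) : Waiting σ [] :=
  waiting_of_stage σ (k := 0) (by simpa [leftBefore] using h)
    (stageColoring_zero σ).symm (by rw [stageColoring_zero]; rfl) (by simp [leftBefore])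

lemma Waiting.append_singleton {l : List (Fin (Δ + 1))} (h : Waiting σ l) (c : Fin (Δ + 1))
    (hc : (l ++ [c]).count (Fin.last Δ) < leftBeforeGreen σ) : Waiting σ (l ++ [c]) := by
  obtain ⟨x, pc, hpos, hrun, hcount⟩ := h
  have hrun' : pRun (graph Δ) (2 * Δ) σ (init Δ) (l ++ [c]) =
      (Function.update (stageColoring σ (leftPos σ x)) (.inl x) c, leftPos σ x) := by
    rw [pRun_append, List.foldl_cons, List.foldl_nil,
      pStep_of_advance_eq _ σ (p := ⟨leftPos σ x, leftPos_lt σ x⟩) hpos, hrun,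
      apply_leftPos, Function.update_idem]
  have hpos' : pPos (graph Δ) (2 * Δ) σ (init Δ) (l ++ [c]) =
      advance (graph Δ) (2 * Δ) σ (Function.update (stageColoring σ (leftPos σ x)) (.inl x) c)
        (leftPos σ x) := by
    rw [pPos, hrun']
  rcases eq_or_ne c (Fin.last Δ) with rfl | hcl
  · rw [update_stageColoring_last] at hrun' hpos'
    have hcount' : (l ++ [Fin.last Δ]).count (Fin.last Δ) = leftBefore σ (leftPos σ x + 1) := by
      rw [List.count_append, List.count_singleton_self, hcount, leftBefore_leftPos_succ]
    refine waiting_of_stage σ (hcount' ▸ hc) (congrArg Prod.fst hrun') ?_ hcount'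
    rw [hpos', advance_of_not_conflicted _ σ _ (leftPos_lt σ x)]
    rw [apply_leftPos, conflicted_inl_iff (fun _ => rfl)]
    simp [stageColoring]
  · refine ⟨x, c, ?_, congrArg Prod.fst hrun', ?_⟩
    · rw [hpos']
      refine advance_of_conflicted _ σ _ (leftPos_lt σ x) ?_
      rw [apply_leftPos, conflicted_inl_iff (fun i => by simp [stageColoring])]
      simpa using hcl
    · rw [List.count_append, List.count_singleton, hcount]
      simp [hcl]

lemma waiting_of_count_lt (l : List (Fin (Δ + 1)))
    (h : l.count (Fin.last Δ) < leftBeforeGreen σ) : Waiting σ l := by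
  induction l using List.reverseRecOn with
  | nil => exact waiting_nil σ (by simpa using h)
  | append_singleton l c ih =>
    exact (ih (by rw [List.count_append] at h; omega)).append_singleton σ c h

lemma pPos_ne_of_count_lt {l : List (Fin (Δ + 1))}
    (h : l.count (Fin.last Δ) < leftBeforeGreen σ) :
    pPos (graph Δ) (2 * Δ) σ (init Δ) l ≠ 2 * Δ := by
  obtain ⟨x, -, hpos, -⟩ := waiting_of_count_lt σ l h
  exact hpos ▸ (leftPos_lt σ x).ne

lemma leftBeforeGreen_mul_le_expectedTotal :
    (leftBeforeGreen σ : ℝ) * (Δ + 1) / 2 ≤ expectedTotal (graph Δ) (2 * Δ) σ (init Δ) := by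
  have hs : Summable (survivalProb fun l => pPos (graph Δ) (2 * Δ) σ (init Δ) l ≠ 2 * Δ) :=
    summable_survivalProb _ (fun l l' h hl => h (pPos_append_of_eq _ σ hl l')) fun l =>
      (exists_pPos_append_eq _ σ exists_free_color _ l).imp fun _ hw => not_not.2 hw
  have h := le_tsum_survivalProb _ hs (Fin.last Δ) _ fun l => pPos_ne_of_count_lt σ
  push_cast at h
  exact h

/-- Reversing the order swaps the left vertices before and after the green right vertex. -/
lemma leftBeforeGreen_add_leftBeforeGreen_rev :
    leftBeforeGreen σ + leftBeforeGreen (Fin.revPerm.trans σ) = Δ := by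
  have key : ∀ x, leftPos (Fin.revPerm.trans σ) x < ((Fin.revPerm.trans σ).symm (.inr 0) : ℕ) ↔
      ¬ leftPos σ x < (σ.symm (.inr 0) : ℕ) := fun x => by
    have hne : σ.symm (.inl x) ≠ σ.symm (.inr 0) := by simp
    have hne' := Fin.val_ne_of_ne hne
    simp only [leftPos, Equiv.symm_trans_apply, Fin.revPerm_symm, Fin.revPerm_apply, Fin.val_rev]
    omega
  unfold leftBeforeGreen leftBefore
  simp_rw [key]
  rw [card_filter_add_card_filter_not]
  simp

lemma two_mul_sum_leftBeforeGreen :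
    2 * ∑ σ : Fin (2 * Δ) ≃ (Fin Δ ⊕ Fin Δ), leftBeforeGreen σ =
      Fintype.card (Fin (2 * Δ) ≃ (Fin Δ ⊕ Fin Δ)) * Δ := by
  let rev : Equiv.Perm (Fin (2 * Δ) ≃ (Fin Δ ⊕ Fin Δ)) :=
    Function.Involutive.toPerm (fun σ => Fin.revPerm.trans σ) fun σ => by ext; simp
  rw [two_mul]
  nth_rewrite 2 [← Equiv.sum_comp rev]
  rw [← sum_add_distrib]
  exact (sum_congr rfl fun σ _ => leftBeforeGreen_add_leftBeforeGreen_rev σ).trans (by simp)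

end GreenStart

/-- Adversarial-start lower bound for Persistent Decentralized Coloring: on the complete
bipartite graph `K_{Δ,Δ}` (with `n = 2Δ` and `Δ+1` colors), starting from the coloring
in which all left vertices get color `0` ("green") and the right vertices get the `Δ`
distinct colors `0,…,Δ-1` (including green), the expected total number of recolorings,
averaged over a uniformly random processing order, is at least `c·Δ² = Ω(nΔ)` for an
absolute constant `c > 0`. -/
theorem stmt_19 :
    ∃ c : ℝ, 0 < c ∧ ∀ Δ : ℕ, 1 ≤ Δ →
      c * (Δ : ℝ) ^ 2 ≤
        (∑ σ : Fin (2 * Δ) ≃ (Fin Δ ⊕ Fin Δ),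
            expectedTotal (completeBipartiteGraph (Fin Δ) (Fin Δ)) (2 * Δ) σ
              (Sum.elim (fun _ => (0 : Fin (Δ + 1))) (fun i => i.castSucc)))
          / (Fintype.card (Fin (2 * Δ) ≃ (Fin Δ ⊕ Fin Δ)) : ℝ) := by
  refine ⟨1 / 4, by norm_num, fun Δ hΔ => ?_⟩
  have : NeZero Δ := ⟨by omega⟩
  set N := Fintype.card (Fin (2 * Δ) ≃ (Fin Δ ⊕ Fin Δ))
  have hN : (0 : ℝ) < N := by
    exact_mod_cast Fintype.card_pos_iff.2 ⟨(finCongr (two_mul Δ)).trans finSumFinEquiv.symm⟩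
  have hsum :
      2 * ∑ σ : Fin (2 * Δ) ≃ (Fin Δ ⊕ Fin Δ), (GreenStart.leftBeforeGreen σ : ℝ) = N * Δ := by
    exact_mod_cast GreenStart.two_mul_sum_leftBeforeGreen
  rw [le_div_iff₀ hN]
  calc 1 / 4 * (Δ : ℝ) ^ 2 * N
      ≤ ∑ σ : Fin (2 * Δ) ≃ (Fin Δ ⊕ Fin Δ),
          (GreenStart.leftBeforeGreen σ : ℝ) * (Δ + 1) / 2 := by
        rw [← Finset.sum_div, ← Finset.sum_mul]
        nlinarith [hN.le, (Nat.cast_nonneg Δ : (0 : ℝ) ≤ Δ)]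
    _ ≤ _ := Finset.sum_le_sum fun σ _ => GreenStart.leftBeforeGreen_mul_le_expectedTotal σ
end
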